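/- Along the ray t = u·e^{-iπ/4} with u > 0, the integrand of the bump-function Fourier integral decays: for fixed k > 0, the real part of g(u·e^{-iπ/4}) = ik - ik·u·e^{-iπ/4} - 1/(2u·e^{-iπ/4}), viewed as a function of u > 0, attains its maximum at u₀ = 1/√(2k), and Re g(u₀ e^{-iπ/4}) = -√k. -/

import Mathlib

open Complex

/-- The exponent `g(t) = ik - ikt - 1/(2t)` along the descent ray `t = u e^{-iπ/4}`. -/
noncomputable def gRay (k : ℝ) (u : ℝ) : ℂ :=
  Complex.I * k - Complex.I * k * (u * Complex.exp (-Complex.I * Real.pi / 4))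
    - 1 / (2 * (u * Complex.exp (-Complex.I * Real.pi / 4)))

lemma hE : Complex.exp (-Complex.I * Real.pi / 4)
    = Complex.ofReal (Real.sqrt 2 / 2) * (1 - Complex.I) := by
  have h : (-Complex.I * Real.pi / 4 : ℂ) = Complex.ofReal 0 + Complex.ofReal (-(Real.pi/4)) * Complex.I := by
    push_cast; ring
  rw [h, Complex.ext_iff]
  constructor
  · simp [Complex.exp_re, Complex.exp_im, Real.cos_pi_div_four]
  · simp [Complex.exp_re, Complex.exp_im, Real.sin_pi_div_four]

lemma re_gRay (k u : ℝ) (hu : 0 < u) :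
    (gRay k u).re = -(Real.sqrt 2 / 2 * k * u) - Real.sqrt 2 / (4 * u) := by
  have hu' : (u : ℂ) ≠ 0 := by exact_mod_cast hu.ne'
  have h2 : (0:ℝ) < Real.sqrt 2 := by positivity
  have key : gRay k u = Complex.ofReal (-(Real.sqrt 2/2*k*u) - Real.sqrt 2/(4*u))
      + Complex.ofReal (k - Real.sqrt 2/2*k*u - Real.sqrt 2/(4*u)) * Complex.I := by
    unfold gRay
    rw [hE]
    have hsr : (Real.sqrt 2:ℝ) * Real.sqrt 2 = 2 := Real.mul_self_sqrt (by norm_num)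
    have hs : ((Real.sqrt 2 : ℂ)) * (Real.sqrt 2 : ℂ) = 2 := by exact_mod_cast congrArg (Complex.ofReal) hsr
    have hs' : ((Real.sqrt 2 : ℝ) : ℂ) ≠ 0 := by exact_mod_cast h2.ne'
    have h1I : (1 : ℂ) - Complex.I ≠ 0 := by
      simp [Complex.ext_iff]
    field_simp [h1I]
    have hsq : ((Real.sqrt 2:ℝ):ℂ)^2 = 2 := by rw [sq]; exact hs
    have hI3 : Complex.I^3 = -Complex.I := by
      rw [pow_succ, Complex.I_sq]; ring
    ring_nf
    push_cast
    field_simp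
    ring_nf
    rw [hsq, hI3]
    simp only [Complex.I_sq]
    ring
  rw [key]
  simp only [Complex.add_re, Complex.ofReal_re, Complex.mul_re, Complex.I_re, Complex.I_im,
    Complex.ofReal_im]
  ring

theorem descent_ray_max (k : ℝ) (hk : 0 < k) :
    (∀ u : ℝ, 0 < u → (gRay k u).re ≤ (gRay k (1 / Real.sqrt (2 * k))).re) ∧
    (gRay k (1 / Real.sqrt (2 * k))).re = -Real.sqrt k := by
  have hkp : 0 < Real.sqrt k := Real.sqrt_pos.mpr hk
  have h2p : 0 < Real.sqrt 2 := Real.sqrt_pos.mpr (by norm_num)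
  have hsk : Real.sqrt k * Real.sqrt k = k := Real.mul_self_sqrt hk.le
  have h2 : Real.sqrt 2 * Real.sqrt 2 = 2 := Real.mul_self_sqrt (by norm_num)
  have hs2k : Real.sqrt (2 * k) = Real.sqrt 2 * Real.sqrt k :=
    Real.sqrt_mul (by norm_num) k
  have hu0 : 0 < 1 / Real.sqrt (2 * k) := by
    rw [hs2k]; positivity
  have hval : (gRay k (1 / Real.sqrt (2 * k))).re = -Real.sqrt k := by
    rw [re_gRay k _ hu0, hs2k]
    field_simp
    ring_nf
    linear_combination (-2*Real.sqrt 2^2 + 8)*hsk + (-2*k)*h2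
  refine ⟨fun u hu => ?_, hval⟩
  rw [hval, re_gRay k u hu]
  set r := Real.sqrt 2 with hr
  set s := Real.sqrt k with hs
  have hnum : r * (2*r*k*u^2 - 4*s*u + r) = 2*(r*s*u - 1)^2 := by
    linear_combination (-2*r^2*u^2)*hsk + h2
  have hnn : 0 ≤ 2*r*k*u^2 - 4*s*u + r := by
    nlinarith [hnum, sq_nonneg (r*s*u - 1), h2p]
  have expand : -s - (-(r/2*k*u) - r/(4*u)) = (2*r*k*u^2 - 4*s*u + r)/(4*u) := by
    field_simp
    ring
  have : 0 ≤ -s - (-(r/2*k*u) - r/(4*u)) := by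
    rw [expand]; positivity
  linarith
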